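/- arXiv:2008.08054 — 2 statements merged into one kernel-verified Lean document; each statement's English description precedes it below -/
import Mathlib

section
/- Sampling procedure correctness: let G be a connected multigraph with partition P into connected blocks. If one samples a spanning tree s of the quotient multigraph G/P uniformly at random, and independently, for each block B of P, samples a spanning tree t_B of G[B] uniformly at random, then the spanning tree of G formed by taking the union of all t_B together with one representative base edge for each edge of s is distributed uniformly over the set of hierarchical spanning trees of G (those whose quotient is a spanning tree of G/P). Equivalently, each such hierarchical tree is produced with probability 1/(τ(G/P) · ∏_{B∈P} τ(G[B])). -/
/-- A multigraph: vertices, edges, and an (ordered) pair of endpoints per edge. -/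
structure Multigraph where
  V : Type
  E : Type
  ends : E → V × V

namespace Multigraph

variable (G : Multigraph)

/-- Two vertices are joined by some edge from the edge set `S`. -/
def Adj (S : Set G.E) (a b : G.V) : Prop :=
  ∃ e ∈ S, G.ends e = (a, b) ∨ G.ends e = (b, a)

/-- The edge set `S` connects the whole vertex set of `G`. -/
def Connects (S : Set G.E) : Prop :=
  ∀ a b : G.V, Relation.ReflTransGen (G.Adj S) a b

/-- `S` is a spanning tree of `G`: it connects `G` and is minimal with this property. -/
def IsSpanningTree (S : Set G.E) : Prop :=
  G.Connects S ∧ ∀ e ∈ S, ¬ G.Connects (S \ {e})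

/-- The number of spanning trees of `G`. -/
noncomputable def tau : ℕ := Nat.card {S : Set G.E // G.IsSpanningTree S}

/-- The induced sub-multigraph on the block `π ⁻¹' {b}`. -/
def induced {B : Type} (π : G.V → B) (b : B) : Multigraph where
  V := {v : G.V // π v = b}
  E := {e : G.E // π (G.ends e).1 = b ∧ π (G.ends e).2 = b}
  ends e := (⟨(G.ends e.1).1, e.2.1⟩, ⟨(G.ends e.1).2, e.2.2⟩)

/-- The quotient multigraph of `G` by the block map `π`: one vertex per block, one
edge per edge of `G` joining two distinct blocks (parallel edges retained). -/
def quot {B : Type} (π : G.V → B) : Multigraph where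
  V := B
  E := {e : G.E // π (G.ends e).1 ≠ π (G.ends e).2}
  ends e := (π (G.ends e.1).1, π (G.ends e.1).2)

/-- The edges of `S` crossing between distinct blocks, viewed as edges of the quotient. -/
def crossing {B : Type} (π : G.V → B) (S : Set G.E) : Set (G.quot π).E :=
  {e : {e : G.E // π (G.ends e).1 ≠ π (G.ends e).2} | e.1 ∈ S}

/-- The restriction of the edge set `S` to the block `b`. -/
def restrict {B : Type} (π : G.V → B) (b : B) (S : Set G.E) : Set (G.induced π b).E :=
  {e : {e : G.E // π (G.ends e).1 = b ∧ π (G.ends e).2 = b} | e.1 ∈ S}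

/-- `S` is a hierarchical spanning tree with respect to blocks `π`: it is a spanning
tree of `G` whose quotient is a spanning tree of the quotient multigraph. -/
def IsHierarchical {B : Type} (π : G.V → B) (S : Set G.E) : Prop :=
  G.IsSpanningTree S ∧ (G.quot π).IsSpanningTree (G.crossing π S)

/-- The induced sub-multigraph on a vertex subset `U`. -/
def inducedOn (U : Set G.V) : Multigraph where
  V := U
  E := {e : G.E | (G.ends e).1 ∈ U ∧ (G.ends e).2 ∈ U}
  ends e := (⟨(G.ends e.1).1, e.2.1⟩, ⟨(G.ends e.1).2, e.2.2⟩)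

/-- Edge `e` crosses between the two distinct blocks `b` and `b'`. -/
def Crosses {B : Type} (π : G.V → B) (e : G.E) (b b' : B) : Prop :=
  (π (G.ends e).1 = b ∧ π (G.ends e).2 = b') ∨ (π (G.ends e).1 = b' ∧ π (G.ends e).2 = b)

end Multigraph

namespace Multigraph

/-- Combine a spanning tree of the quotient with a spanning tree of each block into
one edge set of `G` (taking the base edge underlying each quotient edge). -/
def combine (G : Multigraph) {B : Type} (π : G.V → B)
    (s : Set (G.quot π).E) (t : ∀ b : B, Set ((G.induced π b).E)) : Set G.E :=
  ((fun e : (G.quot π).E => e.1) '' s) ∪ ⋃ b : B, (fun e : (G.induced π b).E => e.1) '' t b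

end Multigraph

namespace Multigraph

variable {G : Multigraph}

/-- Walks as lists of edges. -/
def WalkFrom (G : Multigraph) (S : Set G.E) (u v : G.V) : List G.E → Prop
  | [] => u = v
  | e :: l => e ∈ S ∧ ∃ w, (G.ends e = (u, w) ∨ G.ends e = (w, u)) ∧ WalkFrom G S w v l

lemma adj_symm {S : Set G.E} {a b : G.V} (h : G.Adj S a b) : G.Adj S b a := by
  obtain ⟨e, he, h⟩ := h; exact ⟨e, he, h.symm⟩

lemma reach_symm {S : Set G.E} {a b : G.V}
    (h : Relation.ReflTransGen (G.Adj S) a b) :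
    Relation.ReflTransGen (G.Adj S) b a :=
  by
    induction h with
    | refl => exact Relation.ReflTransGen.refl
    | tail _ hab ih => exact Relation.ReflTransGen.head (adj_symm hab) ih

lemma walkFrom_append {S : Set G.E} {u w v : G.V} {l₁ l₂ : List G.E}
    (h₁ : G.WalkFrom S u w l₁) (h₂ : G.WalkFrom S w v l₂) :
    G.WalkFrom S u v (l₁ ++ l₂) := by
  induction l₁ generalizing u with
  | nil => cases h₁; exact h₂
  | cons e l ih =>
    obtain ⟨he, x, hx, hw⟩ := h₁
    exact ⟨he, x, hx, ih hw⟩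

lemma walkFrom_append_elim {S : Set G.E} {u v : G.V} {l₁ l₂ : List G.E}
    (h : G.WalkFrom S u v (l₁ ++ l₂)) :
    ∃ w, G.WalkFrom S u w l₁ ∧ G.WalkFrom S w v l₂ := by
  induction l₁ generalizing u with
  | nil => exact ⟨u, rfl, h⟩
  | cons e l ih =>
    obtain ⟨he, x, hx, hw⟩ := h
    obtain ⟨w, hw₁, hw₂⟩ := ih hw
    exact ⟨w, ⟨he, x, hx, hw₁⟩, hw₂⟩

lemma walk_of_reach {S : Set G.E} {u v : G.V}
    (h : Relation.ReflTransGen (G.Adj S) u v) : ∃ l, G.WalkFrom S u v l := by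
  induction h with
  | refl => exact ⟨[], rfl⟩
  | tail _ hadj ih =>
    obtain ⟨l, hl⟩ := ih
    obtain ⟨e, he, hor⟩ := hadj
    exact ⟨l ++ [e], walkFrom_append hl ⟨he, _, hor, rfl⟩⟩

lemma noCross_pi {B : Type} {π : G.V → B} {S : Set G.E} {u v : G.V} {l : List G.E}
    (h : G.WalkFrom S u v l) (hall : ∀ e ∈ l, π (G.ends e).1 = π (G.ends e).2) :
    π u = π v := by
  induction l generalizing u with
  | nil => cases h; rfl
  | cons e l ih =>
    obtain ⟨he, w, hor, hw⟩ := h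
    have h1 := hall e List.mem_cons_self
    have huw : π u = π w := by
      rcases hor with h2 | h2 <;> rw [h2] at h1
      · exact h1
      · exact h1.symm
    exact huw.trans (ih hw fun f hf => hall f (List.mem_cons_of_mem e hf))

lemma walk_quot {B : Type} {π : G.V → B} {T : Set G.E} {e₀ : G.E} {u v : G.V} {l : List G.E}
    (h : G.WalkFrom T u v l) (he₀ : e₀ ∉ l) :
    Relation.ReflTransGen ((G.quot π).Adj {f : (G.quot π).E | f.1 ∈ T ∧ f.1 ≠ e₀})
      (π u) (π v) := by
  induction l generalizing u with
  | nil => cases h; exact Relation.ReflTransGen.refl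
  | cons e l ih =>
    obtain ⟨heT, w, hor, hw⟩ := h
    have hrest := ih hw (fun hm => he₀ (List.mem_cons_of_mem e hm))
    by_cases hc : π (G.ends e).1 = π (G.ends e).2
    · have huw : π u = π w := by
        rcases hor with h2 | h2 <;> rw [h2] at hc
        · exact hc
        · exact hc.symm
      rw [huw]; exact hrest
    · refine Relation.ReflTransGen.head
        ⟨⟨e, hc⟩, ⟨heT, fun hh => he₀ (hh ▸ (List.mem_cons_self : e ∈ e :: l))⟩, ?_⟩ hrest
      show (π (G.ends e).1, π (G.ends e).2) = (π u, π w) ∨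
        (π (G.ends e).1, π (G.ends e).2) = (π w, π u)
      rcases hor with h2 | h2 <;> rw [h2]
      · exact Or.inl rfl
      · exact Or.inr rfl

lemma connects_replace {H : Multigraph} {S : Set H.E} {e : H.E}
    (hrep : Relation.ReflTransGen (H.Adj (S \ {e})) (H.ends e).1 (H.ends e).2)
    {a b : H.V} (h : Relation.ReflTransGen (H.Adj S) a b) :
    Relation.ReflTransGen (H.Adj (S \ {e})) a b := by
  induction h with
  | refl => exact Relation.ReflTransGen.refl
  | tail _ hadj ih =>
    obtain ⟨f, hf, hor⟩ := hadj
    by_cases hfe : f = e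
    · subst hfe
      rcases hor with h2 | h2
      · refine ih.trans ?_
        have h1 := congrArg Prod.fst h2
        have h3 := congrArg Prod.snd h2
        rw [h1, h3] at hrep; exact hrep
      · refine ih.trans ?_
        have h1 := congrArg Prod.fst h2
        have h3 := congrArg Prod.snd h2
        rw [h1, h3] at hrep; exact reach_symm hrep
    · exact ih.tail ⟨f, ⟨hf, hfe⟩, hor⟩

lemma cut {H : Multigraph} {s : Set H.E} (hs : H.IsSpanningTree s) {e : H.E} (he : e ∈ s) :
    ¬ Relation.ReflTransGen (H.Adj (s \ {e})) (H.ends e).1 (H.ends e).2 := by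
  intro h
  exact hs.2 e he (fun a b => connects_replace h (hs.1 a b))

lemma exists_first_split {α : Type*} (P : α → Prop) :
    ∀ (l : List α), (∃ x ∈ l, P x) →
      ∃ l₁ x l₂, l = l₁ ++ x :: l₂ ∧ P x ∧ ∀ y ∈ l₁, ¬ P y := by
  classical
  intro l
  induction l with
  | nil => rintro ⟨x, hx, -⟩; exact absurd hx List.not_mem_nil
  | cons a l ih =>
    intro h
    by_cases hp : P a
    · exact ⟨[], a, l, rfl, hp, by simp⟩
    · have h' : ∃ x ∈ l, P x := by
        obtain ⟨x, hx, hPx⟩ := h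
        rcases List.mem_cons.mp hx with rfl | hx'
        · exact absurd hPx hp
        · exact ⟨x, hx', hPx⟩
      obtain ⟨l₁, x, l₂, rfl, hPx, hl₁⟩ := ih h'
      refine ⟨a :: l₁, x, l₂, rfl, hPx, ?_⟩
      intro y hy
      rcases List.mem_cons.mp hy with rfl | hy'
      · exact hp
      · exact hl₁ y hy'

lemma reduce {B : Type} {π : G.V → B} {T : Set G.E}
    (hs : (G.quot π).IsSpanningTree (G.crossing π T)) :
    ∀ (n : ℕ) (l : List G.E) (u v : G.V), l.length ≤ n → G.WalkFrom T u v l → π u = π v →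
      ∃ l', G.WalkFrom T u v l' ∧ ∀ e ∈ l', π (G.ends e).1 = π (G.ends e).2 := by
  intro n
  induction n with
  | zero =>
    intro l u v hlen hw _
    have hl : l = [] := List.length_eq_zero_iff.mp (Nat.le_zero.mp hlen)
    subst hl
    exact ⟨[], hw, by simp⟩
  | succ n ih =>
    intro l u v hlen hw hπ
    by_cases hall : ∀ e ∈ l, π (G.ends e).1 = π (G.ends e).2
    · exact ⟨l, hw, hall⟩
    push_neg at hall
    obtain ⟨l₁, e, l₂, rfl, hce, hl₁⟩ :=
      exists_first_split (fun e => ¬ π (G.ends e).1 = π (G.ends e).2) l hall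
    obtain ⟨p, hw₁, hw₂⟩ := walkFrom_append_elim hw
    obtain ⟨heT, q, hpq, hw₂'⟩ := hw₂
    have hπp : π u = π p := noCross_pi hw₁ (fun y hy => not_not.mp (hl₁ y hy))
    have hc : π (G.ends e).1 ≠ π (G.ends e).2 := hce
    set ehat : (G.quot π).E := ⟨e, hc⟩ with hehatdef
    have hehats : ehat ∈ G.crossing π T := heT
    have hcut := cut hs hehats
    have hmono : ∀ {x y : B},
        Relation.ReflTransGen ((G.quot π).Adj {f : (G.quot π).E | f.1 ∈ T ∧ f.1 ≠ e}) x y →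
        Relation.ReflTransGen ((G.quot π).Adj (G.crossing π T \ {ehat})) x y := by
      intro x y h
      refine Relation.ReflTransGen.mono ?_ _ _ h
      rintro x y ⟨f, hf, hor⟩
      exact ⟨f, ⟨hf.1, fun hh => hf.2 (congrArg Subtype.val hh)⟩, hor⟩
    have hqp_contra : ∀ (l' : List G.E), e ∉ l' → ∀ x, G.WalkFrom T q x l' → π x = π p → False := by
      intro l' hel' x hwx hxp
      have hreach := hmono (walk_quot hwx hel')
      rw [hxp] at hreach
      apply hcut
      show Relation.ReflTransGen _ (π (G.ends e).1) (π (G.ends e).2)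
      rcases hpq with h2 | h2
      · have h1 : (G.ends e).1 = p := congrArg Prod.fst h2
        have h3 : (G.ends e).2 = q := congrArg Prod.snd h2
        rw [h1, h3]; exact reach_symm hreach
      · have h1 : (G.ends e).1 = q := congrArg Prod.fst h2
        have h3 : (G.ends e).2 = p := congrArg Prod.snd h2
        rw [h1, h3]; exact hreach
    have he₂ : e ∈ l₂ := by
      by_contra h'
      exact hqp_contra l₂ h' v hw₂' (hπ ▸ hπp.symm ▸ rfl)
    obtain ⟨l₃, x, l₄, hsplit, hxe, hl₃⟩ := exists_first_split (· = e) l₂ ⟨e, he₂, rfl⟩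
    rw [hxe] at hsplit
    subst hsplit
    obtain ⟨x', hw₃, hw₄⟩ := walkFrom_append_elim hw₂'
    obtain ⟨-, y, hx'y, hw₅⟩ := hw₄
    have hel₃ : e ∉ l₃ := fun hm => hl₃ e hm rfl
    have hkey : (x' = q ∧ y = p) := by
      rcases hpq with h2 | h2 <;> rcases hx'y with h3 | h3
      · -- ends e = (p,q) = (x',y) : contradiction
        exfalso
        have hx'p : x' = p := (congrArg Prod.fst (h2.symm.trans h3)).symm
        exact hqp_contra l₃ hel₃ x' hw₃ (by rw [hx'p])
      · have h4 := h2.symm.trans h3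
        exact ⟨(congrArg Prod.snd h4).symm, (congrArg Prod.fst h4).symm⟩
      · have h4 := h2.symm.trans h3
        exact ⟨(congrArg Prod.fst h4).symm, (congrArg Prod.snd h4).symm⟩
      · exfalso
        have hx'p : x' = p := (congrArg Prod.snd (h2.symm.trans h3)).symm
        exact hqp_contra l₃ hel₃ x' hw₃ (by rw [hx'p])
    have hw₅' : G.WalkFrom T p v l₄ := hkey.2 ▸ hw₅
    have hlen' : (l₁ ++ l₄).length ≤ n := by
      simp only [List.length_append, List.length_cons] at hlen ⊢
      omega
    exact ih (l₁ ++ l₄) u v hlen' (walkFrom_append hw₁ hw₅') hπ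

lemma lift_walk {B : Type} {π : G.V → B} {T : Set G.E} {b : B} {u v : G.V} {l : List G.E}
    (h : G.WalkFrom T u v l) (hall : ∀ e ∈ l, π (G.ends e).1 = π (G.ends e).2)
    (hu : π u = b) (hv : π v = b) :
    Relation.ReflTransGen ((G.induced π b).Adj (G.restrict π b T)) ⟨u, hu⟩ ⟨v, hv⟩ := by
  induction l generalizing u with
  | nil => cases h; exact Relation.ReflTransGen.refl
  | cons e l ih =>
    obtain ⟨heT, w, hor, hw⟩ := h
    have h1 := hall e List.mem_cons_self
    have he1 : π (G.ends e).1 = b := by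
      rcases hor with h2 | h2 <;> rw [h2]
      · exact hu
      · rw [h2] at h1; exact h1.symm ▸ hu
    have he2 : π (G.ends e).2 = b := h1 ▸ he1
    have hwb : π w = b := by
      rcases hor with h2 | h2
      · rw [h2] at he2; exact he2
      · rw [h2] at he1; exact he1
    refine Relation.ReflTransGen.head
      ⟨⟨e, he1, he2⟩, heT, ?_⟩ (ih hw (fun f hf => hall f (List.mem_cons_of_mem e hf)) hwb)
    show ((⟨(G.ends e).1, he1⟩, ⟨(G.ends e).2, he2⟩) : (G.induced π b).V × (G.induced π b).V)
        = (⟨u, hu⟩, ⟨w, hwb⟩) ∨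
      ((⟨(G.ends e).1, he1⟩, ⟨(G.ends e).2, he2⟩) : (G.induced π b).V × (G.induced π b).V)
        = (⟨w, hwb⟩, ⟨u, hu⟩)
    rcases hor with h2 | h2
    · left
      have ha : (G.ends e).1 = u := congrArg Prod.fst h2
      have hb' : (G.ends e).2 = w := congrArg Prod.snd h2
      exact Prod.ext (Subtype.ext ha) (Subtype.ext hb')
    · right
      have ha : (G.ends e).1 = w := congrArg Prod.fst h2
      have hb' : (G.ends e).2 = u := congrArg Prod.snd h2
      exact Prod.ext (Subtype.ext ha) (Subtype.ext hb')

lemma unlift_walk {B : Type} {π : G.V → B} {b : B} {R : Set ((G.induced π b).E)}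
    {S : Set G.E} (hRS : ∀ f ∈ R, f.1 ∈ S) {x y : (G.induced π b).V}
    (h : Relation.ReflTransGen ((G.induced π b).Adj R) x y) :
    Relation.ReflTransGen (G.Adj S) x.1 y.1 := by
  have hstep : ∀ a c : (G.induced π b).V,
      (G.induced π b).Adj R a c → G.Adj S a.1 c.1 := by
    rintro a c ⟨f, hf, hor⟩
    refine ⟨f.1, hRS f hf, ?_⟩
    rcases hor with h2 | h2
    · left
      have ha := congrArg (fun p : (G.induced π b).V × (G.induced π b).V => (p.1.1 : G.V)) h2
      have hb' := congrArg (fun p : (G.induced π b).V × (G.induced π b).V => (p.2.1 : G.V)) h2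
      exact Prod.ext ha hb'
    · right
      have ha := congrArg (fun p : (G.induced π b).V × (G.induced π b).V => (p.1.1 : G.V)) h2
      have hb' := congrArg (fun p : (G.induced π b).V × (G.induced π b).V => (p.2.1 : G.V)) h2
      exact Prod.ext ha hb'
  exact Relation.ReflTransGen.lift Subtype.val hstep _ _ h

lemma restrict_spanning {B : Type} {π : G.V → B} {T : Set G.E}
    (hT : G.IsHierarchical π T) (b : B) :
    (G.induced π b).IsSpanningTree (G.restrict π b T) := by
  constructor
  · intro x y
    obtain ⟨l, hl⟩ := walk_of_reach (hT.1.1 x.1 y.1)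
    obtain ⟨l', hw', hall⟩ :=
      reduce hT.2 l.length l x.1 y.1 le_rfl hl (x.2.trans y.2.symm)
    exact lift_walk hw' hall x.2 y.2
  · intro ed hed hconn'
    apply hT.1.2 ed.1 hed
    intro a c
    have hends : Relation.ReflTransGen (G.Adj (T \ {ed.1})) (G.ends ed.1).1 (G.ends ed.1).2 := by
      have h := hconn' ⟨(G.ends ed.1).1, ed.2.1⟩ ⟨(G.ends ed.1).2, ed.2.2⟩
      exact unlift_walk (S := T \ {ed.1}) (fun f hf => ⟨hf.1, fun hh => hf.2 (Subtype.ext hh)⟩) h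
    exact connects_replace hends (hT.1.1 a c)

lemma crossing_combine {B : Type} {π : G.V → B} (s : Set (G.quot π).E)
    (t : ∀ b : B, Set ((G.induced π b).E)) :
    G.crossing π (G.combine π s t) = s := by
  ext f
  constructor
  · intro hf
    rcases hf with ⟨g, hg, hfg⟩ | hmem
    · have : g = f := Subtype.ext hfg
      exact this ▸ hg
    · exfalso
      obtain ⟨U, ⟨b, rfl⟩, hU⟩ := hmem
      obtain ⟨g, hg, hfg⟩ := hU
      apply f.2
      have hfg' : g.1 = f.1 := hfg
      rw [← hfg']
      exact g.2.1.trans g.2.2.symm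
  · intro hf
    exact Or.inl ⟨f, hf, rfl⟩

lemma restrict_combine {B : Type} {π : G.V → B} (s : Set (G.quot π).E)
    (t : ∀ b : B, Set ((G.induced π b).E)) (b : B) :
    G.restrict π b (G.combine π s t) = t b := by
  ext f
  constructor
  · intro hf
    rcases hf with ⟨g, hg, hfg⟩ | hmem
    · apply absurd _ g.2
      have hfg' : g.1 = f.1 := hfg
      rw [hfg']
      exact f.2.1.trans f.2.2.symm
    · obtain ⟨U, ⟨b', rfl⟩, hU⟩ := hmem
      obtain ⟨g, hg, hfg⟩ := hU
      have hfg' : g.1 = f.1 := hfg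
      have hb : b' = b := by
        have := g.2.1
        rw [hfg'] at this
        exact this.symm.trans f.2.1
      subst hb
      have : g = f := Subtype.ext hfg
      exact this ▸ hg
  · intro hf
    exact Or.inr (Set.mem_iUnion.mpr ⟨b, ⟨f, hf, rfl⟩⟩)

lemma combine_eq {B : Type} {π : G.V → B} (T : Set G.E) :
    G.combine π (G.crossing π T) (fun b => G.restrict π b T) = T := by
  ext e
  constructor
  · intro he
    rcases he with ⟨g, hg, rfl⟩ | hmem
    · exact hg
    · obtain ⟨U, ⟨b, rfl⟩, hU⟩ := hmem
      obtain ⟨g, hg, rfl⟩ := hU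
      exact hg
  · intro he
    by_cases hc : π (G.ends e).1 = π (G.ends e).2
    · exact Or.inr (Set.mem_iUnion.mpr
        ⟨π (G.ends e).1, ⟨⟨e, rfl, hc.symm⟩, he, rfl⟩⟩)
    · exact Or.inl ⟨⟨e, hc⟩, he, rfl⟩

end Multigraph

open Multigraph in
/-- Sampling correctness: choosing a uniform spanning tree of the quotient `G/P` and,
independently, a uniform spanning tree of each block, and combining them, yields a
distribution in which every hierarchical spanning tree of `G` has probability
`1 / (τ(G/P) * ∏_B τ(G[B]))`, i.e. the uniform distribution on hierarchical trees. -/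
theorem uniform_hierarchical_sampling (G : Multigraph) [Finite G.V] [Finite G.E]
    {B : Type} [Fintype B] (π : G.V → B)
    (hsurj : Function.Surjective π)
    (hconn : G.Connects Set.univ)
    (hblocks : ∀ b : B, (G.induced π b).Connects Set.univ)
    [Fintype ({s : Set (G.quot π).E // (G.quot π).IsSpanningTree s} ×
      ∀ b : B, {t : Set ((G.induced π b).E) // (G.induced π b).IsSpanningTree t})]
    [Nonempty ({s : Set (G.quot π).E // (G.quot π).IsSpanningTree s} ×
      ∀ b : B, {t : Set ((G.induced π b).E) // (G.induced π b).IsSpanningTree t})] :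
    ∀ T : Set G.E, G.IsHierarchical π T →
      (PMF.map (fun p => G.combine π p.1.1 (fun b => (p.2 b).1))
        (PMF.uniformOfFintype
          ({s : Set (G.quot π).E // (G.quot π).IsSpanningTree s} ×
            ∀ b : B, {t : Set ((G.induced π b).E) // (G.induced π b).IsSpanningTree t}))) T
        = 1 / (((G.quot π).tau * ∏ b : B, (G.induced π b).tau : ℕ) : ENNReal) := by
  intro T hT
  classical
  set p₀ : ({s : Set (G.quot π).E // (G.quot π).IsSpanningTree s} ×
      ∀ b : B, {t : Set ((G.induced π b).E) // (G.induced π b).IsSpanningTree t}) :=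
    (⟨G.crossing π T, hT.2⟩, fun b => ⟨G.restrict π b T, restrict_spanning hT b⟩)
  have hp₀ : G.combine π p₀.1.1 (fun b => (p₀.2 b).1) = T := combine_eq T
  have huniq : ∀ p : ({s : Set (G.quot π).E // (G.quot π).IsSpanningTree s} ×
      ∀ b : B, {t : Set ((G.induced π b).E) // (G.induced π b).IsSpanningTree t}),
      G.combine π p.1.1 (fun b => (p.2 b).1) = T → p = p₀ := by
    rintro ⟨⟨s, hs⟩, t⟩ hp
    simp only at hp
    have h1 : s = G.crossing π T := by rw [← hp, crossing_combine]
    have h2 : ∀ b, (t b).1 = G.restrict π b T := fun b => by rw [← hp, restrict_combine]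
    exact Prod.ext (Subtype.ext h1) (funext fun b => Subtype.ext (h2 b))
  rw [PMF.map_apply]
  rw [tsum_eq_single p₀ ?_]
  swap
  · intro p hp; exact if_neg (fun h => hp (huniq p h.symm))
  rw [if_pos hp₀.symm, PMF.uniformOfFintype_apply]
  have hcard : Fintype.card ({s : Set (G.quot π).E // (G.quot π).IsSpanningTree s} ×
      ∀ b : B, {t : Set ((G.induced π b).E) // (G.induced π b).IsSpanningTree t})
      = (G.quot π).tau * ∏ b : B, (G.induced π b).tau := by
    rw [← Nat.card_eq_fintype_card, Nat.card_prod, Nat.card_pi]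
    rfl
  rw [hcard, one_div]
end

section
/- Splitting a hierarchical tree yields hierarchical trees: let G be a connected graph with hierarchy quotients H_1, ..., H_ℓ, and let t be a hierarchical spanning tree of G. If e is an edge of t and t − e = t_1 ⊔ t_2 are the two resulting components, and if the vertex sets of t_1 and t_2 each induce connected preimage structure compatible with the hierarchy (i.e., each level-n block is either entirely in t_1, entirely in t_2, or split, with the split blocks forming valid sub-blocks), then t_1 and t_2 are hierarchical spanning trees of the subgraphs they span, with respect to the restricted hierarchies. -/
namespace Multigraph

open Relation

variable {G : Multigraph}

lemma adj_symm_s18 {S : Set G.E} : Symmetric (G.Adj S) := by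
  rintro a b ⟨e, he, h⟩
  exact ⟨e, he, h.symm⟩

lemma rtg_symm {S : Set G.E} {a b : G.V} (h : ReflTransGen (G.Adj S) a b) :
    ReflTransGen (G.Adj S) b a :=
  haveI : Std.Symm (G.Adj S) := ⟨fun x y hxy => @adj_symm_s18 G S x y hxy⟩
  (ReflTransGen.symmetric (r := G.Adj S)).symm _ _ h

lemma rtg_lift' {α β : Type*} {r : α → α → Prop} {r' : β → β → Prop} (f : α → β)
    (h : ∀ a b, r a b → ReflTransGen r' (f a) (f b)) {a b : α}
    (hr : ReflTransGen r a b) : ReflTransGen r' (f a) (f b) := by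
  induction hr with
  | refl => exact ReflTransGen.refl
  | tail _ h2 ih => exact ih.trans (h _ _ h2)

lemma connects_of_detour {S : Set G.E} {e : G.E} (hS : G.Connects S)
    (hdet : ReflTransGen (G.Adj (S \ {e})) (G.ends e).1 (G.ends e).2) :
    G.Connects (S \ {e}) := by
  have hdet' := rtg_symm hdet
  intro a b
  have h := hS a b
  induction h with
  | refl => exact ReflTransGen.refl
  | tail _ h2 ih =>
    obtain ⟨e'', he'', hh⟩ := h2
    by_cases hc : e'' = e
    · subst hc
      rcases hh with hh | hh
      · rw [hh] at hdet; exact ih.trans hdet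
      · rw [hh] at hdet'; exact ih.trans hdet'
    · exact ih.tail ⟨e'', ⟨he'', hc⟩, hh⟩

lemma connects_quot {B : Type} {π : G.V → B} {S : Set G.E}
    (hS : G.Connects S) (hsurj : Function.Surjective π) :
    (G.quot π).Connects (G.crossing π S) := by
  intro b b'
  obtain ⟨u, rfl⟩ := hsurj b
  obtain ⟨u', rfl⟩ := hsurj b'
  refine rtg_lift' π ?_ (hS u u')
  rintro a c ⟨e', he', hh⟩
  by_cases hpc : π a = π c
  · rw [hpc]; exact ReflTransGen.refl
  · refine ReflTransGen.single ?_
    rcases hh with hh | hh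
    · exact ⟨⟨e', by rw [hh]; exact hpc⟩, he',
        Or.inl (by show (π (G.ends e').1, π (G.ends e').2) = _; rw [hh]; rfl)⟩
    · exact ⟨⟨e', by rw [hh]; exact fun h => hpc h.symm⟩, he',
        Or.inr (by show (π (G.ends e').1, π (G.ends e').2) = _; rw [hh]; rfl)⟩

lemma side_lift {U : Set G.V} {S' : Set (G.inducedOn U).E} {S : Set G.E}
    (hsub : ∀ e' ∈ S', e'.1 ∈ S) {x y : (G.inducedOn U).V}
    (h : ReflTransGen ((G.inducedOn U).Adj S') x y) :
    ReflTransGen (G.Adj S) x.1 y.1 := by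
  refine ReflTransGen.lift Subtype.val ?_ _ _ h
  rintro a b ⟨e', he', hh⟩
  refine ⟨e'.1, hsub _ he', ?_⟩
  rcases hh with hh | hh
  · left
    have h1 : ((G.inducedOn U).ends e').1.1 = a.1 := congrArg (fun q => q.1.1) hh
    have h2 : ((G.inducedOn U).ends e').2.1 = b.1 := congrArg (fun q => q.2.1) hh
    exact Prod.ext h1 h2
  · right
    have h1 : ((G.inducedOn U).ends e').1.1 = b.1 := congrArg (fun q => q.1.1) hh
    have h2 : ((G.inducedOn U).ends e').2.1 = a.1 := congrArg (fun q => q.2.1) hh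
    exact Prod.ext h1 h2

section Side

variable {t : Set G.E} {e : G.E} {r r' : G.V} {U U' : Set G.V}

lemma side_not_rr' (ht : G.IsSpanningTree t) (he : e ∈ t)
    (hre : G.ends e = (r, r') ∨ G.ends e = (r', r)) :
    ¬ ReflTransGen (G.Adj (t \ {e})) r r' := by
  intro h
  apply ht.2 e he
  apply connects_of_detour ht.1
  rcases hre with hre | hre <;> rw [hre]
  · exact h
  · exact rtg_symm h

lemma side_disjoint (ht : G.IsSpanningTree t) (he : e ∈ t)
    (hre : G.ends e = (r, r') ∨ G.ends e = (r', r))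
    (hU : U = {x | ReflTransGen (G.Adj (t \ {e})) r x})
    (hU' : U' = {x | ReflTransGen (G.Adj (t \ {e})) r' x})
    {v : G.V} (hv : v ∈ U) (hv' : v ∈ U') : False := by
  rw [hU] at hv; rw [hU'] at hv'
  exact side_not_rr' ht he hre (ReflTransGen.trans hv (rtg_symm hv'))

lemma side_cover (ht : G.IsSpanningTree t) (he : e ∈ t)
    (hre : G.ends e = (r, r') ∨ G.ends e = (r', r))
    (hU : U = {x | ReflTransGen (G.Adj (t \ {e})) r x})
    (hU' : U' = {x | ReflTransGen (G.Adj (t \ {e})) r' x})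
    (v : G.V) : v ∈ U ∨ v ∈ U' := by
  have h := ht.1 r v
  subst hU; subst hU'
  induction h with
  | refl => exact Or.inl ReflTransGen.refl
  | tail h1 h2 ih =>
    obtain ⟨e'', he'', hh⟩ := h2
    by_cases hc : e'' = e
    · subst hc
      rcases hre with hre | hre <;> rcases hh with hh | hh <;> rw [hre] at hh <;>
        obtain ⟨h3, h4⟩ := Prod.mk.injEq .. ▸ hh
      · exact Or.inr (h4 ▸ ReflTransGen.refl)
      · exact Or.inl (h3 ▸ ReflTransGen.refl)
      · exact Or.inl (h4 ▸ ReflTransGen.refl)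
      · exact Or.inr (h3 ▸ ReflTransGen.refl)
    · rcases ih with ih | ih
      · exact Or.inl (ih.tail ⟨e'', ⟨he'', hc⟩, hh⟩)
      · exact Or.inr (ih.tail ⟨e'', ⟨he'', hc⟩, hh⟩)

lemma side_project
    (hU : U = {x | ReflTransGen (G.Adj (t \ {e})) r x})
    {a b : G.V} (ha : a ∈ U) (hb : b ∈ U)
    (h : ReflTransGen (G.Adj (t \ {e})) a b) :
    ReflTransGen ((G.inducedOn U).Adj {e' : (G.inducedOn U).E | e'.1 ∈ t ∧ e'.1 ≠ e})
      ⟨a, ha⟩ ⟨b, hb⟩ := by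
  have key : ∀ c (hc : ReflTransGen (G.Adj (t \ {e})) a c), ∃ hcU : c ∈ U,
      ReflTransGen ((G.inducedOn U).Adj {e' : (G.inducedOn U).E | e'.1 ∈ t ∧ e'.1 ≠ e})
        ⟨a, ha⟩ ⟨c, hcU⟩ := by
    intro c hc
    induction hc with
    | refl => exact ⟨ha, ReflTransGen.refl⟩
    | @tail c d h1 h2 ih =>
      obtain ⟨hcU, ihp⟩ := ih
      obtain ⟨e'', ⟨he''t, he''ne⟩, hh⟩ := h2
      have hdU : d ∈ U := by
        rw [hU] at hcU ⊢
        exact hcU.tail ⟨e'', ⟨he''t, he''ne⟩, hh⟩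
      have hend : (G.ends e'').1 ∈ U ∧ (G.ends e'').2 ∈ U := by
        rcases hh with hh | hh
        · rw [hh]; exact ⟨hcU, hdU⟩
        · rw [hh]; exact ⟨hdU, hcU⟩
      refine ⟨hdU, ihp.tail ⟨⟨e'', hend⟩, ⟨he''t, he''ne⟩, ?_⟩⟩
      rcases hh with hh | hh
      · left
        refine Prod.ext (Subtype.ext ?_) (Subtype.ext ?_)
        · show (G.ends e'').1 = c; rw [hh]
        · show (G.ends e'').2 = d; rw [hh]
      · right
        refine Prod.ext (Subtype.ext ?_) (Subtype.ext ?_)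
        · show (G.ends e'').1 = d; rw [hh]
        · show (G.ends e'').2 = c; rw [hh]
  obtain ⟨hbU, hp⟩ := key b h
  exact hp

lemma side_spanning (ht : G.IsSpanningTree t) (he : e ∈ t)
    (hre : G.ends e = (r, r') ∨ G.ends e = (r', r))
    (hU : U = {x | ReflTransGen (G.Adj (t \ {e})) r x})
    (hU' : U' = {x | ReflTransGen (G.Adj (t \ {e})) r' x}) :
    (G.inducedOn U).IsSpanningTree {e' : (G.inducedOn U).E | e'.1 ∈ t ∧ e'.1 ≠ e} := by
  have hrU : r ∈ U := by rw [hU]; exact ReflTransGen.refl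
  have hr'U' : r' ∈ U' := by rw [hU']; exact ReflTransGen.refl
  constructor
  · rintro ⟨a, ha⟩ ⟨b, hb⟩
    have ha' := ha; have hb' := hb
    rw [hU] at ha' hb'
    exact side_project hU ha hb ((rtg_symm ha').trans hb')
  · rintro e₀ ⟨he₀t, he₀e⟩ hcon
    apply ht.2 e₀.1 he₀t
    -- within U: everything reaches r via t \ {e₀.1}
    have inU : ∀ a (ha : a ∈ U), ReflTransGen (G.Adj (t \ {e₀.1})) r a := by
      intro a ha
      have h := hcon ⟨r, hrU⟩ ⟨a, ha⟩
      refine side_lift (S := t \ {e₀.1}) ?_ h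
      rintro e' ⟨⟨he't, _⟩, he'ne⟩
      exact ⟨he't, fun hh => he'ne (Subtype.ext hh)⟩
    -- within U': everything reaches r' via t \ {e₀.1}
    have inU' : ∀ a (ha : a ∈ U'), ReflTransGen (G.Adj (t \ {e₀.1})) r' a := by
      intro a ha
      rw [hU'] at ha
      induction ha with
      | refl => exact ReflTransGen.refl
      | @tail c d h1 h2 ih =>
        obtain ⟨e'', ⟨he''t, _⟩, hh⟩ := h2
        by_cases hc : e'' = e₀.1
        · exfalso
          have hcU' : c ∈ U' := by rw [hU']; exact h1
          have hcU : c ∈ U := by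
            subst hc
            rcases hh with hh | hh
            · have : (G.ends e₀.1).1 = c := by rw [hh]
              exact this ▸ e₀.2.1
            · have : (G.ends e₀.1).2 = c := by rw [hh]
              exact this ▸ e₀.2.2
          exact side_disjoint ht he hre hU hU' hcU hcU'
        · exact ih.tail ⟨e'', ⟨he''t, hc⟩, hh⟩
    have hbridge : G.Adj (t \ {e₀.1}) r r' :=
      ⟨e, ⟨he, fun hh => he₀e (hh.symm : e₀.1 = e)⟩, hre⟩
    have toR : ∀ x : G.V, ReflTransGen (G.Adj (t \ {e₀.1})) r x := by
      intro x
      rcases side_cover ht he hre hU hU' x with hx | hx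
      · exact inU x hx
      · exact (ReflTransGen.single hbridge).trans (inU' x hx)
    intro a b
    exact (rtg_symm (toR a)).trans (toR b)

lemma side_quot {B B' : Type} {π : G.V → B}
    (hT : (G.inducedOn U).IsSpanningTree {e' : (G.inducedOn U).E | e'.1 ∈ t ∧ e'.1 ≠ e})
    (hq : (G.quot π).IsSpanningTree (G.crossing π t))
    (π' : (G.inducedOn U).V → B') (j : B' → B) (hj : Function.Injective j)
    (hcomm : ∀ v, j (π' v) = π v.1)
    (hsurj : Function.Surjective π') :
    ((G.inducedOn U).quot π').IsSpanningTree
      ((G.inducedOn U).crossing π' {e' : (G.inducedOn U).E | e'.1 ∈ t ∧ e'.1 ≠ e}) := by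
  constructor
  · exact connects_quot hT.1 hsurj
  · rintro e₀ he₀ hcon
    obtain ⟨he₀t, he₀e⟩ := he₀
    set e1 : G.E := e₀.1.1 with he1def
    have hne : π (G.ends e1).1 ≠ π (G.ends e1).2 := by
      intro hh
      apply e₀.2
      apply hj
      rw [hcomm, hcomm]
      exact hh
    set c0 : (G.quot π).E := ⟨e1, hne⟩ with hc0def
    apply hq.2 c0 (he₀t : e1 ∈ t)
    apply connects_of_detour hq.1
    -- detour: endpoints of c0 are connected in crossing π t \ {c0}
    have hx : (G.ends e1).1 ∈ U := e₀.1.2.1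
    have hy : (G.ends e1).2 ∈ U := e₀.1.2.2
    have hpath := hcon (π' ⟨(G.ends e1).1, hx⟩) (π' ⟨(G.ends e1).2, hy⟩)
    have hlift : ReflTransGen ((G.quot π).Adj (G.crossing π t \ {c0}))
        (j (π' ⟨(G.ends e1).1, hx⟩)) (j (π' ⟨(G.ends e1).2, hy⟩)) := by
      refine ReflTransGen.lift j ?_ _ _ hpath
      rintro a b ⟨f, ⟨⟨hft, hfe⟩, hfne⟩, hh⟩
      have hgne : π (G.ends f.1.1).1 ≠ π (G.ends f.1.1).2 := by
        intro hh2
        apply f.2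
        apply hj
        rw [hcomm, hcomm]
        exact hh2
      refine ⟨⟨f.1.1, hgne⟩, ⟨hft, ?_⟩, ?_⟩
      · intro hh2
        apply hfne
        have h4 : (⟨f.1.1, hgne⟩ : (G.quot π).E) = c0 := hh2
        have h3 : f.1.1 = e1 := congrArg (Subtype.val : (G.quot π).E → G.E) h4
        show f = e₀
        exact Subtype.ext (Subtype.ext h3)
      · rcases hh with hh | hh
        · left
          have h1 := congrArg (fun q => (j q.1, j q.2)) hh
          simp only at h1
          show (π (G.ends f.1.1).1, π (G.ends f.1.1).2) = (j a, j b)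
          rw [← h1]
          show _ = (j (π' _), j (π' _))
          rw [hcomm, hcomm]
          rfl
        · right
          have h1 := congrArg (fun q => (j q.1, j q.2)) hh
          simp only at h1
          show (π (G.ends f.1.1).1, π (G.ends f.1.1).2) = (j b, j a)
          rw [← h1]
          show _ = (j (π' _), j (π' _))
          rw [hcomm, hcomm]
          rfl
    have hA : j (π' ⟨(G.ends e1).1, hx⟩) = π (G.ends e1).1 := hcomm _
    have hB : j (π' ⟨(G.ends e1).2, hy⟩) = π (G.ends e1).2 := hcomm _
    rw [hA, hB] at hlift
    exact hlift

end Side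

end Multigraph

open Multigraph in
/-- Splitting a hierarchical spanning tree along an edge yields hierarchical spanning
trees of the two spanned subgraphs, with respect to the restricted hierarchies (blocks
intersected with each side, empty intersections discarded). -/
theorem split_hierarchical_tree (G : Multigraph) [Finite G.V] [Finite G.E]
    {L : ℕ → Type} (p : ∀ n, G.V → L n) (f : ∀ n, L n → L (n + 1))
    (hcomp : ∀ n v, p (n + 1) v = f n (p n v))
    (ℓ : ℕ) (t : Set G.E)
    (ht : G.IsSpanningTree t)
    (hhier : ∀ n, 1 ≤ n → n ≤ ℓ → (G.quot (p n)).IsSpanningTree (G.crossing (p n) t))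
    (e : G.E) (he : e ∈ t)
    (U1 U2 : Set G.V)
    (hU1 : U1 = {x : G.V | Relation.ReflTransGen (G.Adj (t \ {e})) (G.ends e).1 x})
    (hU2 : U2 = {x : G.V | Relation.ReflTransGen (G.Adj (t \ {e})) (G.ends e).2 x})
    (hvalid : ∀ n, 1 ≤ n → n ≤ ℓ → ∀ b : L n,
      (G.inducedOn ({v : G.V | p n v = b} ∩ U1)).Connects Set.univ ∧
      (G.inducedOn ({v : G.V | p n v = b} ∩ U2)).Connects Set.univ) :
    (G.inducedOn U1).IsSpanningTree {e' : (G.inducedOn U1).E | e'.1 ∈ t ∧ e'.1 ≠ e} ∧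
    (G.inducedOn U2).IsSpanningTree {e' : (G.inducedOn U2).E | e'.1 ∈ t ∧ e'.1 ≠ e} ∧
    ∀ n, 1 ≤ n → n ≤ ℓ →
      ((G.inducedOn U1).quot
          (fun v : (G.inducedOn U1).V =>
            (⟨p n v.1, v.1, v.2, rfl⟩ : {b : L n // ∃ u ∈ U1, p n u = b}))).IsSpanningTree
        ((G.inducedOn U1).crossing
          (fun v : (G.inducedOn U1).V =>
            (⟨p n v.1, v.1, v.2, rfl⟩ : {b : L n // ∃ u ∈ U1, p n u = b}))
          {e' : (G.inducedOn U1).E | e'.1 ∈ t ∧ e'.1 ≠ e}) ∧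
      ((G.inducedOn U2).quot
          (fun v : (G.inducedOn U2).V =>
            (⟨p n v.1, v.1, v.2, rfl⟩ : {b : L n // ∃ u ∈ U2, p n u = b}))).IsSpanningTree
        ((G.inducedOn U2).crossing
          (fun v : (G.inducedOn U2).V =>
            (⟨p n v.1, v.1, v.2, rfl⟩ : {b : L n // ∃ u ∈ U2, p n u = b}))
          {e' : (G.inducedOn U2).E | e'.1 ∈ t ∧ e'.1 ≠ e}) := by
  have hre1 : G.ends e = ((G.ends e).1, (G.ends e).2) ∨ G.ends e = ((G.ends e).2, (G.ends e).1) :=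
    Or.inl rfl
  have hre2 : G.ends e = ((G.ends e).2, (G.ends e).1) ∨ G.ends e = ((G.ends e).1, (G.ends e).2) :=
    Or.inr rfl
  have h1 := Multigraph.side_spanning ht he hre1 hU1 hU2
  have h2 := Multigraph.side_spanning ht he hre2 hU2 hU1
  refine ⟨h1, h2, fun n hn1 hn2 => ⟨?_, ?_⟩⟩
  · exact Multigraph.side_quot h1 (hhier n hn1 hn2)
      (fun v : (G.inducedOn U1).V => (⟨p n v.1, v.1, v.2, rfl⟩ : {b : L n // ∃ u ∈ U1, p n u = b}))
      Subtype.val Subtype.val_injective (fun v => rfl)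
      (by rintro ⟨b, u, hu, hb⟩; exact ⟨⟨u, hu⟩, Subtype.ext hb⟩)
  · exact Multigraph.side_quot h2 (hhier n hn1 hn2)
      (fun v : (G.inducedOn U2).V => (⟨p n v.1, v.1, v.2, rfl⟩ : {b : L n // ∃ u ∈ U2, p n u = b}))
      Subtype.val Subtype.val_injective (fun v => rfl)
      (by rintro ⟨b, u, hu, hb⟩; exact ⟨⟨u, hu⟩, Subtype.ext hb⟩)
end
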